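/- arXiv:1608.03887 — 2 statements merged into one kernel-verified Lean document; each statement's English description precedes it below -/
import Mathlib

section
/- Let (a_n) be a sequence of nonnegative reals and (e_n) a sequence of positive reals with e_{m+n} ≤ e_m e_n and e_m e_n / e_{m+n} bounded above by a constant K, such that a_{n+m} ≤ e_n a_m for all m, n. If liminf_{n→∞} a_n / e_n = 0 then limsup_{n→∞} a_n / e_n = 0. -/
open Filter

/-- If `(a_n)` is nonnegative, `(e_n)` is positive with `e_{m+n} ≤ e_m e_n` and
`e_m e_n / e_{m+n} ≤ K`, and `a_{n+m} ≤ e_n a_m` for all `m, n`, then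
`liminf a_n / e_n = 0` implies `limsup a_n / e_n = 0`. -/
theorem liminf_zero_imp_limsup_zero (a e : ℕ → ℝ) (K : ℝ)
    (ha : ∀ n, 0 ≤ a n) (he : ∀ n, 0 < e n)
    (hsubmul : ∀ m n, e (m + n) ≤ e m * e n)
    (hK : ∀ m n, e m * e n / e (m + n) ≤ K)
    (hrec : ∀ m n, a (n + m) ≤ e n * a m)
    (hliminf : liminf (fun n => a n / e n) atTop = 0) :
    limsup (fun n => a n / e n) atTop = 0 := by
  set r := fun n => a n / e n with hrdef
  have hr0 : ∀ n, 0 ≤ r n := fun n => div_nonneg (ha n) (he n).le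
  have hKpos : 0 < K := by
    have h := hK 0 0
    rw [show (0 + 0 : ℕ) = 0 from rfl, mul_div_assoc, div_self (he 0).ne', mul_one] at h
    exact lt_of_lt_of_le (he 0) h
  have key : ∀ m N, m ≤ N → r N ≤ K * r m := by
    intro m N hmN
    obtain ⟨n, rfl⟩ := Nat.exists_eq_add_of_le hmN
    have h1 : a (m + n) ≤ e n * a m := by simpa [add_comm] using hrec m n
    have h2 : r (m + n) ≤ (e n * a m) / e (m + n) := by
      apply div_le_div_of_nonneg_right h1 (he (m + n)).le
    have h3 : (a m / e m) * (e m * e n / e (m + n)) = (e n * a m) / e (m + n) := by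
      rw [div_mul_div_comm, show a m * (e m * e n) = e m * (e n * a m) by ring,
        mul_div_mul_left _ _ (he m).ne']
    calc r (m + n) ≤ (e n * a m) / e (m + n) := h2
      _ = (a m / e m) * (e m * e n / e (m + n)) := h3.symm
      _ ≤ (a m / e m) * K :=
        mul_le_mul_of_nonneg_left (hK m n) (div_nonneg (ha m) (he m).le)
      _ = K * r m := mul_comm _ _
  have hbddBelow : IsBoundedUnder (· ≥ ·) atTop r :=
    isBoundedUnder_of ⟨0, fun n => hr0 n⟩
  have hbddAbove : IsBoundedUnder (· ≤ ·) atTop r :=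
    isBoundedUnder_of ⟨K * r 0, fun n => key 0 n (Nat.zero_le n)⟩
  refine le_antisymm ?_ ?_
  · apply le_of_forall_pos_le_add
    intro ε hε
    have hεK : 0 < ε / K := div_pos hε hKpos
    have hfreq : ∃ᶠ n in atTop, r n < ε / K := by
      apply frequently_lt_of_liminf_lt hbddAbove.isCoboundedUnder_ge
      rw [hliminf]; exact hεK
    obtain ⟨m, hm⟩ := hfreq.exists
    have hev : ∀ᶠ n in atTop, r n ≤ K * r m :=
      eventually_atTop.2 ⟨m, fun n hn => key m n hn⟩
    have := limsup_le_of_le hbddBelow.isCoboundedUnder_le hev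
    calc limsup r atTop ≤ K * r m := this
      _ ≤ K * (ε / K) := mul_le_mul_of_nonneg_left hm.le hKpos.le
      _ = ε := mul_div_cancel₀ ε hKpos.ne'
      _ ≤ 0 + ε := by linarith
  · rw [← hliminf]
    exact liminf_le_limsup hbddAbove hbddBelow
end

section
/- Fix ℓ ≥ 1 in the free group G of rank d ≥ 2. For every ℓ-subgraph ξ (constructed as the union of balls V_k = {t : d(t, v_k) ≤ k} along a self-avoiding geodesic ray v_0, v_1, v_2, ... with |v_0| = ℓ, |v_k| = ℓ + k) and for every k ≥ 0, the subgraph ξ contains exactly (2d-1)^{⌊k/2⌋} vertices at distance ℓ + k from the identity. -/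
set_option linter.unusedSectionVars false
namespace EllAux
open FreeGroup List
variable {α : Type*} [DecidableEq α]

abbrev R (a b : α × Bool) : Prop := b ≠ (a.1, !a.2)

lemma R_iff (a b : α × Bool) : R a b ↔ ¬(a.1 = b.1 ∧ a.2 = !b.2) := by
  rcases a with ⟨a1, a2⟩; rcases b with ⟨b1, b2⟩
  simp only [R, Prod.ext_iff, ne_eq, not_and]
  cases a2 <;> cases b2 <;> simp <;> tauto

lemma chain'_reduce (L : List (α × Bool)) : List.IsChain R (FreeGroup.reduce L) := by
  induction L with
  | nil => simp
  | cons x L ih =>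
    rw [FreeGroup.reduce.cons]
    cases h : FreeGroup.reduce L with
    | nil => simp
    | cons hd tl =>
      rw [h] at ih
      by_cases hc : x.1 = hd.1 ∧ x.2 = !hd.2
      · simpa [hc] using ih.tail
      · simp only [hc, if_false]
        exact List.isChain_cons_cons.2 ⟨(R_iff x hd).2 hc, ih⟩

lemma reduce_eq_self {w : List (α × Bool)} (h : List.IsChain R w) :
    FreeGroup.reduce w = w := by
  induction w with
  | nil => rfl
  | cons x w ih =>
    rw [FreeGroup.reduce.cons, ih h.tail]
    cases hw : w with
    | nil => rfl
    | cons hd tl =>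
      have hr : R x hd := (List.isChain_cons_cons.1 (hw ▸ h)).1
      simp [(R_iff x hd).1 hr]

lemma chain'_toWord (g : FreeGroup α) : List.IsChain R g.toWord := by
  rw [← FreeGroup.reduce_toWord]; exact chain'_reduce _

lemma toWord_mk_of_chain' {w : List (α × Bool)} (h : List.IsChain R w) :
    (FreeGroup.mk w).toWord = w := by
  rw [FreeGroup.toWord_mk, reduce_eq_self h]

abbrev pinv (a : α × Bool) : α × Bool := (a.1, !a.2)

lemma chain'_invRev {w : List (α × Bool)} (h : List.IsChain R w) :
    List.IsChain R (FreeGroup.invRev w) := by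
  rw [FreeGroup.invRev, List.isChain_reverse, List.isChain_map]
  refine h.imp ?_
  intro a b hab
  rcases a with ⟨a1, a2⟩; rcases b with ⟨b1, b2⟩
  simp only [R, Prod.ext_iff, ne_eq, not_and, flip] at hab ⊢
  cases a2 <;> cases b2 <;> simp at hab ⊢ <;> tauto

lemma head?_invRev (w : List (α × Bool)) :
    (FreeGroup.invRev w).head? = w.getLast?.map pinv := by
  rw [FreeGroup.invRev, List.head?_reverse, List.getLast?_map]

lemma getLast?_invRev (w : List (α × Bool)) :
    (FreeGroup.invRev w).getLast? = w.head?.map pinv := by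
  rw [FreeGroup.invRev, List.getLast?_reverse, List.head?_map]

lemma invRev_append (w₁ w₂ : List (α × Bool)) :
    FreeGroup.invRev (w₁ ++ w₂) = FreeGroup.invRev w₂ ++ FreeGroup.invRev w₁ := by
  simp [FreeGroup.invRev]

/-- longest common prefix of two lists -/
def comPre : List (α × Bool) → List (α × Bool) → List (α × Bool)
  | a :: as, b :: bs => if a = b then a :: comPre as bs else []
  | _, _ => []

lemma comPre_nil_left (l : List (α × Bool)) : comPre [] l = [] := by cases l <;> rfl

lemma comPre_nil_right (l : List (α × Bool)) : comPre l [] = [] := by cases l <;> rfl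

lemma comPre_comm (l₁ l₂ : List (α × Bool)) : comPre l₁ l₂ = comPre l₂ l₁ := by
  induction l₁ generalizing l₂ with
  | nil => rw [comPre_nil_left, comPre_nil_right]
  | cons a as ih =>
    cases l₂ with
    | nil => rw [comPre_nil_left, comPre_nil_right]
    | cons b bs =>
      by_cases h : a = b
      · subst h; simp [comPre, ih]
      · simp [comPre, h, Ne.symm h]

/-- decomposition along the common prefix, with differing heads of the remainders. -/
lemma comPre_spec (l₁ l₂ : List (α × Bool)) :
    ∃ a b : List (α × Bool), l₁ = comPre l₁ l₂ ++ a ∧ l₂ = comPre l₁ l₂ ++ b ∧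
      ∀ x ∈ a.head?, ∀ y ∈ b.head?, x ≠ y := by
  induction l₁ generalizing l₂ with
  | nil => exact ⟨[], l₂, by simp [comPre_nil_left]⟩
  | cons x xs ih =>
    cases l₂ with
    | nil => exact ⟨x :: xs, [], by simp [comPre_nil_right]⟩
    | cons y ys =>
      by_cases h : x = y
      · subst h
        obtain ⟨a, b, h1, h2, h3⟩ := ih ys
        refine ⟨a, b, ?_, ?_, h3⟩
        · simpa [comPre] using h1
        · simpa [comPre] using h2
      · refine ⟨x :: xs, y :: ys, by simp [comPre, h], by simp [comPre, h], ?_⟩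
        simpa using h

lemma ultrametric (l₁ l₂ l₃ : List (α × Bool)) :
    min (comPre l₁ l₂).length (comPre l₂ l₃).length ≤ (comPre l₁ l₃).length := by
  induction l₁ generalizing l₂ l₃ with
  | nil => simp [comPre_nil_left]
  | cons x xs ih =>
    cases l₂ with
    | nil => simp [comPre_nil_right, comPre_nil_left]
    | cons y ys =>
      cases l₃ with
      | nil => simp [comPre_nil_right]
      | cons z zs =>
        by_cases hxy : x = y
        · by_cases hyz : y = z
          · subst hxy; subst hyz
            have := ih ys zs
            simp only [comPre, eq_self_iff_true, if_true, List.length_cons]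
            omega
          · simp [comPre, hxy, hyz]
        · simp [comPre, hxy]

/-- Key cancellation lemma: `|g⁻¹h| + 2·(common prefix) = |g| + |h|`. -/
lemma key (g h : FreeGroup α) :
    (g⁻¹ * h).norm + 2 * (comPre g.toWord h.toWord).length = g.norm + h.norm := by
  obtain ⟨a, b, h1, h2, h3⟩ := comPre_spec g.toWord h.toWord
  set p := comPre g.toWord h.toWord with hp
  have hg : g = FreeGroup.mk (p ++ a) := by rw [← h1, FreeGroup.mk_toWord]
  have hh : h = FreeGroup.mk (p ++ b) := by rw [← h2, FreeGroup.mk_toWord]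
  have hmul : g⁻¹ * h = FreeGroup.mk (FreeGroup.invRev a ++ b) := by
    rw [hg, hh, FreeGroup.inv_mk, invRev_append, FreeGroup.mul_mk]
    have heq : (FreeGroup.invRev a ++ FreeGroup.invRev p) ++ (p ++ b)
        = FreeGroup.invRev a ++ (FreeGroup.invRev p ++ p) ++ b := by simp
    rw [heq]
    have h4 : FreeGroup.mk (FreeGroup.invRev p ++ p) = 1 := by
      rw [← FreeGroup.mul_mk, ← FreeGroup.inv_mk, inv_mul_cancel]
    calc FreeGroup.mk (FreeGroup.invRev a ++ (FreeGroup.invRev p ++ p) ++ b)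
        = FreeGroup.mk (FreeGroup.invRev a) * FreeGroup.mk (FreeGroup.invRev p ++ p)
            * FreeGroup.mk b := by rw [FreeGroup.mul_mk, FreeGroup.mul_mk]
      _ = FreeGroup.mk (FreeGroup.invRev a) * FreeGroup.mk b := by rw [h4, mul_one]
      _ = FreeGroup.mk (FreeGroup.invRev a ++ b) := FreeGroup.mul_mk
  have hca : List.IsChain R a := (chain'_toWord g).suffix ⟨p, h1.symm⟩
  have hcb : List.IsChain R b := (chain'_toWord h).suffix ⟨p, h2.symm⟩
  have hchain : List.IsChain R (FreeGroup.invRev a ++ b) := by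
    rw [List.isChain_append]
    refine ⟨chain'_invRev hca, hcb, ?_⟩
    intro x hx y hy
    rw [getLast?_invRev] at hx
    simp only [Option.mem_def, Option.map_eq_some_iff] at hx
    obtain ⟨x', hx', rfl⟩ := hx
    have hne : x' ≠ y := h3 x' hx' y hy
    simp only [R, ne_eq, Prod.ext_iff, not_and]
    intro h5
    exact fun h6 => hne (Prod.ext h5.symm (by simpa using h6.symm))
  have hnorm : (g⁻¹ * h).norm = a.length + b.length := by
    rw [hmul]
    show (FreeGroup.mk _).toWord.length = _
    rw [toWord_mk_of_chain' hchain]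
    simp [FreeGroup.invRev_length]
  have hng : g.norm = p.length + a.length := by
    show g.toWord.length = _; rw [h1]; simp
  have hnh : h.norm = p.length + b.length := by
    show h.toWord.length = _; rw [h2]; simp
  omega

lemma comPre_cons_ne {a b : α × Bool} {as bs : List (α × Bool)}
    (h : comPre (a :: as) (b :: bs) = []) : a ≠ b := by
  intro hab
  simp [comPre, hab] at h

section Count

variable [Fintype α]

/-- reduced words of length `n` whose first letter does not cancel `x`. -/
def extF : ℕ → (α × Bool) → Finset (List (α × Bool))
  | 0, _ => {[]}
  | n+1, x => (Finset.univ.filter (fun q => q ≠ (x.1, !x.2))).biUnion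
      fun q => (extF n q).image (q :: ·)

lemma extF_card (n : ℕ) (x : α × Bool) :
    (extF n x).card = (2 * Fintype.card α - 1) ^ n := by
  induction n generalizing x with
  | zero => simp [extF]
  | succ n ih =>
    rw [extF, Finset.card_biUnion]
    · have h1 : ∀ q ∈ Finset.univ.filter (fun q => q ≠ (x.1, !x.2)),
          ((extF n q).image (q :: ·)).card = (2 * Fintype.card α - 1) ^ n := by
        intro q _
        rw [Finset.card_image_of_injective _ (fun a b h => by injection h), ih]
      rw [Finset.sum_congr rfl h1, Finset.sum_const, Finset.filter_ne', Finset.card_erase_of_mem (Finset.mem_univ _)]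
      have : (Finset.univ : Finset (α × Bool)).card = 2 * Fintype.card α := by
        simp [Fintype.card_prod]; ring
      rw [this, smul_eq_mul, pow_succ]
      ring
    · intro q₁ h₁ q₂ h₂ hne
      rw [Function.onFun, Finset.disjoint_left]
      intro w hw₁ hw₂
      simp only [Finset.mem_image] at hw₁ hw₂
      obtain ⟨w₁, _, rfl⟩ := hw₁
      obtain ⟨w₂, _, h⟩ := hw₂
      exact hne (by injection h.symm)

lemma mem_extF {n : ℕ} {x : α × Bool} {w : List (α × Bool)} :
    w ∈ extF n x ↔ w.length = n ∧ List.IsChain R (x :: w) := by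
  induction n generalizing x w with
  | zero =>
    simp only [extF, Finset.mem_singleton]
    constructor
    · rintro rfl; simp
    · rintro ⟨h, -⟩; exact List.length_eq_zero_iff.1 h
  | succ n ih =>
    simp only [extF, Finset.mem_biUnion, Finset.mem_filter, Finset.mem_univ, true_and,
      Finset.mem_image]
    constructor
    · rintro ⟨q, hq, w', hw', rfl⟩
      obtain ⟨hl, hc⟩ := ih.1 hw'
      exact ⟨by simp [hl], List.isChain_cons_cons.2 ⟨hq, hc⟩⟩
    · rintro ⟨hl, hc⟩
      cases w with
      | nil => simp at hl
      | cons y w' =>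
        have h1 := List.isChain_cons_cons.1 hc
        exact ⟨y, h1.1, w', ih.2 ⟨by simpa using hl, h1.2⟩, rfl⟩

lemma count_no_cancel (g : FreeGroup α) (hg : g ≠ 1) (n : ℕ) :
    {u : FreeGroup α | u.norm = n ∧ (g * u).norm = g.norm + n}.ncard
      = (2 * Fintype.card α - 1) ^ n := by
  have hne : g.toWord ≠ [] := fun h => hg (FreeGroup.toWord_eq_nil_iff.1 h)
  set x := g.toWord.getLast hne with hx
  have hlast : g.toWord.getLast? = some x := List.getLast?_eq_getLast hne
  have hset : {u : FreeGroup α | u.norm = n ∧ (g * u).norm = g.norm + n}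
      = FreeGroup.mk '' ↑(extF n x) := by
    ext u
    simp only [Set.mem_setOf_eq, Set.mem_image, Finset.mem_coe]
    constructor
    · rintro ⟨hn, hmul⟩
      refine ⟨u.toWord, ?_, FreeGroup.mk_toWord⟩
      rw [mem_extF]
      refine ⟨hn, ?_⟩
      rw [List.isChain_cons]
      refine ⟨?_, chain'_toWord u⟩
      intro y hy
      -- no cancellation: common prefix of (g⁻¹).toWord and u.toWord is empty
      have hkey := key g⁻¹ u
      rw [inv_inv, FreeGroup.norm_inv_eq] at hkey
      have hcp : (comPre (g⁻¹).toWord u.toWord).length = 0 := by omega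
      have hcpe : comPre (g⁻¹).toWord u.toWord = [] := List.length_eq_zero_iff.1 hcp
      have hginv : (g⁻¹).toWord = FreeGroup.invRev g.toWord := FreeGroup.toWord_inv g
      -- head of invRev g.toWord is pinv x
      have hhead : (FreeGroup.invRev g.toWord).head? = some (pinv x) := by
        rw [head?_invRev, hlast]; rfl
      -- u.toWord has head y
      cases hu : u.toWord with
      | nil => simp [hu] at hy
      | cons y' t =>
        have hy' : y = y' := by simp [hu] at hy; exact hy.symm
        subst hy'
        cases hg2 : FreeGroup.invRev g.toWord with
        | nil =>
          exfalso
          apply hne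
          have := congrArg FreeGroup.invRev hg2
          rwa [FreeGroup.invRev_invRev, FreeGroup.invRev_empty] at this
        | cons z t' =>
          have hz : z = pinv x := by rw [hg2] at hhead; simpa using hhead
          rw [hginv, hg2, hu] at hcpe
          have := comPre_cons_ne hcpe
          rw [hz] at this
          exact fun h => this (h ▸ rfl)
    · rintro ⟨w, hw, rfl⟩
      rw [mem_extF] at hw
      obtain ⟨hl, hc⟩ := hw
      have hcw : List.IsChain R w := hc.tail
      have htw : (FreeGroup.mk w).toWord = w := toWord_mk_of_chain' hcw
      refine ⟨by rw [FreeGroup.norm, htw, hl], ?_⟩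
      have hgm : g * FreeGroup.mk w = FreeGroup.mk (g.toWord ++ w) := by
        conv_lhs => rw [← FreeGroup.mk_toWord (x := g)]
        rw [FreeGroup.mul_mk]
      have hchain : List.IsChain R (g.toWord ++ w) := by
        rw [List.isChain_append]
        refine ⟨chain'_toWord g, hcw, ?_⟩
        intro a ha b hb
        have : a = x := by rw [hlast] at ha; exact (by simpa using ha : x = a).symm
        subst this
        exact (List.isChain_cons.1 hc).1 b hb
      rw [hgm, FreeGroup.norm, toWord_mk_of_chain' hchain]
      simp [FreeGroup.norm, hl]
  rw [hset, Set.ncard_image_of_injOn, Set.ncard_coe_finset, extF_card]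
  intro w₁ h₁ w₂ h₂ hmk
  have e₁ : (FreeGroup.mk w₁).toWord = w₁ :=
    toWord_mk_of_chain' ((mem_extF.1 h₁).2).tail
  have e₂ : (FreeGroup.mk w₂).toWord = w₂ :=
    toWord_mk_of_chain' ((mem_extF.1 h₂).2).tail
  rw [← e₁, ← e₂, hmk]

end Count

lemma comPre_length_le_left (l₁ l₂ : List (α × Bool)) :
    (comPre l₁ l₂).length ≤ l₁.length := by
  obtain ⟨a, b, h1, -, -⟩ := comPre_spec l₁ l₂
  calc (comPre l₁ l₂).length ≤ (comPre l₁ l₂ ++ a).length := by simp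
    _ = l₁.length := by rw [← h1]

/-- distances along the geodesic ray -/
lemma chainI {d ℓ : ℕ} (v : ℕ → FreeGroup (Fin d))
    (hnorm : ∀ k, (v k).norm = ℓ + k)
    (hadj : ∀ k, ((v k)⁻¹ * v (k + 1)).norm = 1)
    {i j : ℕ} (hij : i ≤ j) : ((v i)⁻¹ * v j).norm = j - i := by
  have up : ∀ n, ((v i)⁻¹ * v (i + n)).norm ≤ n := by
    intro n
    induction n with
    | zero => simp
    | succ n ih =>
      have : (v i)⁻¹ * v (i + (n+1)) = ((v i)⁻¹ * v (i + n)) * ((v (i + n))⁻¹ * v (i + n + 1)) := by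
        group
      rw [this]
      calc _ ≤ ((v i)⁻¹ * v (i + n)).norm + ((v (i + n))⁻¹ * v (i + n + 1)).norm :=
              FreeGroup.norm_mul_le _ _
        _ ≤ n + 1 := by rw [hadj]; omega
  have low : (v j).norm ≤ (v i).norm + ((v i)⁻¹ * v j).norm := by
    calc (v j).norm = (v i * ((v i)⁻¹ * v j)).norm := by group
      _ ≤ _ := FreeGroup.norm_mul_le _ _
  have := up (j - i)
  rw [show i + (j - i) = j from by omega] at this
  rw [hnorm i, hnorm j] at low
  omega

end EllAux

open EllAux

/-- Vertex counting in `ℓ`-subgraphs (Lemma 3): fix `ℓ ≥ 1` in the free group `G` of rank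
`d ≥ 2`.  Let `(v_k)` be a self-avoiding geodesic ray with `|v_k| = ℓ + k` (consecutive
vertices adjacent in the Cayley tree), and let `ξ = ⋃_k V_k` with
`V_k = {t : d(t, v_k) ≤ k}`.  Then for every `k ≥ 0`, `ξ` contains exactly
`(2d-1)^⌊k/2⌋` vertices at distance `ℓ + k` from the identity. -/
theorem ell_subgraph_vertex_count (d : ℕ) (hd : 2 ≤ d) (ℓ : ℕ) (hℓ : 1 ≤ ℓ)
    (v : ℕ → FreeGroup (Fin d))
    (hnorm : ∀ k, (v k).norm = ℓ + k)
    (hadj : ∀ k, ((v k)⁻¹ * v (k + 1)).norm = 1)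
    (k : ℕ) :
    {t : FreeGroup (Fin d) |
        (∃ j : ℕ, ((v j)⁻¹ * t).norm ≤ j) ∧ t.norm = ℓ + k}.ncard
      = (2 * d - 1) ^ (k / 2) := by
  set m := k / 2 with hm
  set q := k - k / 2 with hq
  have hmq : m + q = k := by omega
  have hmlq : m ≤ q := by omega
  set g := v q with hg
  have hgnorm : g.norm = ℓ + q := hnorm q
  have hgne : g ≠ 1 := by
    intro h
    rw [h, FreeGroup.norm_one] at hgnorm
    omega
  have hset : {t : FreeGroup (Fin d) |
        (∃ j : ℕ, ((v j)⁻¹ * t).norm ≤ j) ∧ t.norm = ℓ + k}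
      = (g * ·) '' {u : FreeGroup (Fin d) | u.norm = m ∧ (g * u).norm = g.norm + m} := by
    ext t
    simp only [Set.mem_setOf_eq, Set.mem_image]
    constructor
    · rintro ⟨⟨j, hj⟩, hk⟩
      -- first: norm (g⁻¹ * t) ≤ q
      have hq1 : (g⁻¹ * t).norm ≤ q := by
        rcases le_total j q with hjq | hjq
        · have h1 : ((v q)⁻¹ * v j).norm = q - j := by
            rw [show (v q)⁻¹ * v j = ((v j)⁻¹ * v q)⁻¹ by group, FreeGroup.norm_inv_eq]
            exact chainI v hnorm hadj hjq
          calc (g⁻¹ * t).norm = (((v q)⁻¹ * v j) * ((v j)⁻¹ * t)).norm := by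
                rw [hg]; group
            _ ≤ ((v q)⁻¹ * v j).norm + ((v j)⁻¹ * t).norm := FreeGroup.norm_mul_le _ _
            _ ≤ (q - j) + j := by rw [h1]; omega
            _ = q := by omega
        · have k1 := key (v j) t
          have k2 := key g (v j)
          have k3 := key g t
          have hqj : (g⁻¹ * v j).norm = j - q := chainI v hnorm hadj hjq
          have hu := ultrametric g.toWord (v j).toWord t.toWord
          rw [hnorm j, hk] at k1
          rw [hgnorm, hnorm j, hqj] at k2
          rw [hgnorm, hk] at k3
          have hb : (comPre g.toWord t.toWord).length ≤ ℓ + q := by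
            have h6 := comPre_length_le_left g.toWord t.toWord
            rw [show g.toWord.length = g.norm from rfl, hgnorm] at h6
            exact h6
          omega
      -- now: exact values
      refine ⟨g⁻¹ * t, ⟨?_, ?_⟩, by group⟩
      · have k4 := key g⁻¹ (g⁻¹ * t)
        rw [inv_inv, FreeGroup.norm_inv_eq, show g * (g⁻¹ * t) = t by group, hk, hgnorm] at k4
        omega
      · have k4 := key g⁻¹ (g⁻¹ * t)
        rw [inv_inv, FreeGroup.norm_inv_eq, show g * (g⁻¹ * t) = t by group, hk, hgnorm] at k4
        rw [show g * (g⁻¹ * t) = t by group, hk, hgnorm]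
        omega
    · rintro ⟨u, ⟨hu1, hu2⟩, rfl⟩
      refine ⟨⟨q, ?_⟩, by rw [hu2, hgnorm]; omega⟩
      rw [← hg, show (g)⁻¹ * (g * u) = u by group, hu1]
      omega
  rw [hset, Set.ncard_image_of_injective _ (mul_right_injective g),
    count_no_cancel g hgne m, Fintype.card_fin]
end
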